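/- For $i \in I$ and $s \geq 1$, define elements $P_{i,s}$ of $U(\mathfrak{h}[t])$ recursively by $P_{i,0} = 1$ and $P_{i,s} = -\frac{1}{s}\sum_{r=1}^s (h_i \otimes t^r) P_{i,s-r}$. Let $\mathbf{pr} : U(\mathfrak{g}[t]) \to U(\mathfrak{h}[t])$ be the projection corresponding to the decomposition $U(\mathfrak{g}[t]) = U(\mathfrak{h}[t]) \oplus (\mathfrak{n}^-[t]U(\mathfrak{g}[t]) + U(\mathfrak{g}[t])\mathfrak{n}^+[t])$. Then (Garland's identity) $\mathbf{pr}((x_i^+ \otimes t)^s (x_i^- \otimes 1)^s) = (-1)^s (s!)^2 P_{i,s}$. -/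

import Mathlib

/-!
STATEMENT 5 (Garland's identity):  In `U(𝔤[t])`, with `P_{i,0} = 1`,
`P_{i,s} = -(1/s) ∑_{r=1}^s (h_i ⊗ t^r) P_{i,s-r}`, and `pr` the projection onto
`U(𝔥[t])` along `𝔫⁻[t]U(𝔤[t]) + U(𝔤[t])𝔫⁺[t]`, one has
`pr((x_i⁺ ⊗ t)^s (x_i⁻)^s) = (-1)^s (s!)² P_{i,s}`.
-/

open scoped TensorProduct
open Polynomial

noncomputable section

variable (𝔤 : Type) [LieRing 𝔤] [LieAlgebra ℂ 𝔤]

/-- The current algebra `𝔤[t] = 𝔤 ⊗ ℂ[t]`. -/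
abbrev CurrentAlgebra := ℂ[X] ⊗[ℂ] 𝔤

instance : LieAlgebra ℂ (CurrentAlgebra 𝔤) where
  lie_smul c x y := by
    have h1 : c • y = (algebraMap ℂ ℂ[X] c) • y := (algebraMap_smul ℂ[X] c y).symm
    have h2 : c • ⁅x, y⁆ = (algebraMap ℂ ℂ[X] c) • ⁅x, y⁆ :=
      (algebraMap_smul ℂ[X] c ⁅x, y⁆).symm
    rw [h1, h2]
    exact LieAlgebra.lie_smul _ _ _

/-- `U(𝔤[t])`, the universal enveloping algebra of the current algebra. -/
abbrev UCA := UniversalEnvelopingAlgebra ℂ (CurrentAlgebra 𝔤)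

attribute [local instance 100] LieRing.ofAssociativeRing LieAlgebra.ofAssociativeAlgebra

/-- The canonical embedding `𝔤[t] → U(𝔤[t])`. -/
def iotaCA : CurrentAlgebra 𝔤 →ₗ⁅ℂ⁆ UCA 𝔤 := UniversalEnvelopingAlgebra.ι ℂ

/-- Garland's elements:  `P 0 = 1`, `P s = -(1/s) ∑_{r=1}^s H r * P (s - r)`,
where `H r` stands for `h_i ⊗ t^r`. -/
def garlandP {A : Type} [Ring A] [Algebra ℂ A] (H : ℕ → A) : ℕ → A
  | 0 => 1
  | (s + 1) => (-((s : ℂ) + 1)⁻¹) •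
      ∑ r ∈ Finset.range (s + 1), H (r + 1) * garlandP H (s - r)
  termination_by s => s
  decreasing_by exact Nat.lt_succ_of_le (Nat.sub_le s r)

variable (𝔥 np nm : LieSubalgebra ℂ 𝔤)

/-- `U(𝔥[t])` inside `U(𝔤[t])`, the subalgebra generated by `𝔥 ⊗ ℂ[t]`. -/
def Uh : Subalgebra ℂ (UCA 𝔤) :=
  Algebra.adjoin ℂ (Set.range fun p : ℂ[X] × ↥𝔥 => iotaCA 𝔤 (p.1 ⊗ₜ (p.2 : 𝔤)))

/-- The left ideal `𝔫⁻[t] U(𝔤[t])`. -/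
def NmU : Submodule ℂ (UCA 𝔤) :=
  Submodule.span ℂ {z | ∃ (g : ℂ[X]) (x : ↥nm) (u : UCA 𝔤),
    z = iotaCA 𝔤 (g ⊗ₜ (x : 𝔤)) * u}

/-- The right ideal `U(𝔤[t]) 𝔫⁺[t]`. -/
def NpU : Submodule ℂ (UCA 𝔤) :=
  Submodule.span ℂ {z | ∃ (g : ℂ[X]) (x : ↥np) (u : UCA 𝔤),
    z = u * iotaCA 𝔤 (g ⊗ₜ (x : 𝔤))}

/-!
Write `E = e ⊗ t`, `F = f ⊗ 1` and `J = f[t] U(𝔤[t]) + U(𝔤[t]) e[t]`, which `pr` kills. Moving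
`f ⊗ tᵐ` to the left through a power of `E`, or `e ⊗ tᵐ` to the right through a power of `F`,
produces only two correction terms, because the third iterated commutator vanishes in `𝔰𝔩₂[t]`.
Modulo `J` this expresses `E^{n+1} F^n (f ⊗ tᵐ)` and `E^n (e ⊗ t^{m+1}) F^{n+1}` through the same
two expressions at level `n`, and both follow the recursion of
`(-1)ⁿ (n+1)! n! ∑_{r ≤ n} (h ⊗ t^{m+r+1}) P_{n-r}`. At `m = 0` this is
`E^{n+1} F^{n+1} ≡ (-1)^{n+1} ((n+1)!)² P_{n+1}`, and `pr` fixes `P_{n+1} ∈ U(𝔥[t])`.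
-/

open Finset

section CommutatorExpansion

variable {A : Type*} [Semiring A] {x y z w : A}

theorem mul_pow_add_two (hx : x * y = y * x + z) (hz : z * y = y * z + w) (hw : Commute w y)
    (n : ℕ) :
    x * y ^ (n + 2) =
      y ^ (n + 2) * x + (n + 2) • (y ^ (n + 1) * z) + (n + 2).choose 2 • (y ^ n * w) := by
  induction n with
  | zero =>
    rw [pow_two, ← mul_assoc, hx, add_mul, mul_assoc, hx, hz]
    simp only [mul_add, ← mul_assoc, ← pow_two, zero_add, pow_one, pow_zero, one_mul,
      Nat.choose_self, one_smul, two_nsmul]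
    abel
  | succ n ih =>
    rw [show n + 1 + 2 = n + 2 + 1 by ring, pow_succ y (n + 2), ← mul_assoc, ih]
    simp only [add_mul, smul_mul_assoc, mul_assoc, hx, hz, hw.eq]
    simp only [mul_add, ← mul_assoc, ← pow_succ, Nat.choose_succ_succ' (n + 2),
      Nat.choose_one_right, add_smul, smul_add]
    abel

open MulOpposite in
theorem pow_add_two_mul (hx : y * x = x * y + z) (hz : y * z = z * y + w) (hw : Commute y w)
    (n : ℕ) :
    y ^ (n + 2) * x =
      x * y ^ (n + 2) + (n + 2) • (z * y ^ (n + 1)) + (n + 2).choose 2 • (w * y ^ n) := by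
  have h := mul_pow_add_two (x := op x) (y := op y) (z := op z) (w := op w)
    (by rw [← op_mul, hx, op_add, op_mul]) (by rw [← op_mul, hz, op_add, op_mul]) hw.op.symm n
  apply op_injective
  simpa only [op_mul, op_pow, op_add, op_smul] using h

end CommutatorExpansion

section GarlandElements

variable {A : Type} [Ring A] [Algebra ℂ A] (H : ℕ → A)

theorem garlandP_zero : garlandP H 0 = 1 := by
  rw [garlandP]

theorem garlandP_succ (s : ℕ) :
    garlandP H (s + 1) =
      (-((s : ℂ) + 1)⁻¹) • ∑ r ∈ range (s + 1), H (r + 1) * garlandP H (s - r) := by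
  rw [garlandP]

theorem garlandP_mem {S : Subalgebra ℂ A} (hH : ∀ r, H r ∈ S) (s : ℕ) : garlandP H s ∈ S := by
  induction s using Nat.strong_induction_on with
  | _ s ih =>
    cases s with
    | zero => simp [garlandP_zero, S.one_mem]
    | succ s =>
      rw [garlandP_succ]
      exact S.smul_mem (S.sum_mem fun r _ => S.mul_mem (hH _) (ih _ (by omega))) _

theorem commute_garlandP {a : A} (ha : ∀ r, Commute a (H r)) (s : ℕ) :
    Commute a (garlandP H s) := by
  induction s using Nat.strong_induction_on with
  | _ s ih =>
    cases s with
    | zero => simp [garlandP_zero]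
    | succ s =>
      rw [garlandP_succ]
      exact ((Commute.sum_right _ _ _ fun r _ => (ha _).mul_right (ih _ (by omega))).smul_right _)

def garlandS (n m : ℕ) : A :=
  ∑ r ∈ range (n + 1), H (m + r + 1) * garlandP H (n - r)

theorem garlandP_succ_eq_smul_garlandS (n : ℕ) :
    garlandP H (n + 1) = (-((n : ℂ) + 1)⁻¹) • garlandS H n 0 := by
  simp only [garlandP_succ, garlandS, zero_add]

theorem garlandS_zero (m : ℕ) : garlandS H 0 m = H (m + 1) := by
  simp [garlandS, garlandP_zero]

theorem garlandS_succ (n m : ℕ) :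
    garlandS H (n + 1) m = H (m + 1) * garlandP H (n + 1) + garlandS H n (m + 1) := by
  rw [garlandS, sum_range_succ', garlandS, add_comm]
  congr 1
  refine sum_congr rfl fun r _ => ?_
  rw [Nat.add_sub_add_right, add_right_comm m 1 r, add_assoc m r 1]

/-- The normalisation in which the commutation relations of `𝔰𝔩₂[t]` produce `garlandS`. -/
def garlandV (n m : ℕ) : A :=
  ((-1 : ℂ) ^ n * (n + 1).factorial * n.factorial) • garlandS H n m

theorem commute_garlandV {a : A} (ha : ∀ r, Commute a (H r)) (n m : ℕ) :
    Commute a (garlandV H n m) :=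
  (Commute.sum_right _ _ _ fun _ _ => (ha _).mul_right (commute_garlandP H ha _)).smul_right _

theorem garlandV_zero (m : ℕ) : garlandV H 0 m = H (m + 1) := by
  simp [garlandV, garlandS_zero]

theorem garlandV_succ (n m : ℕ) :
    garlandV H (n + 1) m =
      ((n : ℂ) + 2) • (H (m + 1) * garlandV H n 0)
        - (((n : ℂ) + 2) * ((n : ℂ) + 1)) • garlandV H n (m + 1) := by
  have hn : (n : ℂ) + 1 ≠ 0 := by exact_mod_cast n.succ_ne_zero
  simp only [garlandV, garlandS_succ, garlandP_succ_eq_smul_garlandS, mul_smul_comm, smul_add,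
    smul_smul, Nat.factorial_succ]
  push_cast
  match_scalars <;> field_simp <;> ring

theorem garlandV_zero_right (n : ℕ) :
    garlandV H n 0 = ((-1 : ℂ) ^ (n + 1) * ((n + 1).factorial : ℂ) ^ 2) • garlandP H (n + 1) := by
  have hn : (n : ℂ) + 1 ≠ 0 := by exact_mod_cast n.succ_ne_zero
  rw [garlandV, garlandP_succ_eq_smul_garlandS, smul_smul, Nat.factorial_succ]
  push_cast
  congr 1
  field_simp
  ring

end GarlandElements

section CurrentAlgebra

variable {𝔤 : Type} [LieRing 𝔤] [LieAlgebra ℂ 𝔤]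

def cur (x : 𝔤) (a : ℕ) : UCA 𝔤 := iotaCA 𝔤 (((X : ℂ[X]) ^ a) ⊗ₜ x)

theorem cur_smul (c : ℂ) (x : 𝔤) (a : ℕ) : cur (c • x) a = c • cur x a := by
  rw [cur, cur, TensorProduct.tmul_smul, map_smul]

theorem cur_mul_cur (x y : 𝔤) (a b : ℕ) :
    cur x a * cur y b = cur y b * cur x a + cur ⁅x, y⁆ (a + b) := by
  have h := (iotaCA 𝔤).map_lie (((X : ℂ[X]) ^ a) ⊗ₜ x) (((X : ℂ[X]) ^ b) ⊗ₜ y)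
  rw [LieAlgebra.ExtendScalars.bracket_tmul, Ring.lie_def, ← pow_add] at h
  rw [cur, cur, cur, h]
  abel

theorem commute_cur_cur (x : 𝔤) (a b : ℕ) : Commute (cur x a) (cur x b) := by
  have h := cur_mul_cur x x a b
  rwa [lie_self, cur.eq_def 0, TensorProduct.tmul_zero, map_zero, add_zero] at h

end CurrentAlgebra

section Spans

variable {𝔤 : Type} [LieRing 𝔤] [LieAlgebra ℂ 𝔤]

def curMulSpan (f : 𝔤) : Submodule ℂ (UCA 𝔤) :=
  Submodule.span ℂ {z | ∃ (a : ℕ) (u : UCA 𝔤), z = cur f a * u}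

def mulCurSpan (e : 𝔤) : Submodule ℂ (UCA 𝔤) :=
  Submodule.span ℂ {z | ∃ (a : ℕ) (u : UCA 𝔤), z = u * cur e a}

variable {e f x : 𝔤} {c : ℂ}

theorem cur_mul_mem_curMulSpan (a : ℕ) (u : UCA 𝔤) : cur f a * u ∈ curMulSpan f :=
  Submodule.subset_span ⟨a, u, rfl⟩

theorem mul_cur_mem_mulCurSpan (a : ℕ) (u : UCA 𝔤) : u * cur e a ∈ mulCurSpan e :=
  Submodule.subset_span ⟨a, u, rfl⟩

theorem curMulSpan_le_comap_mulLeft (hxf : ⁅x, f⁆ = c • f) (m : ℕ) :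
    curMulSpan f ≤ (curMulSpan f).comap (LinearMap.mulLeft ℂ (cur x m)) := by
  refine Submodule.span_le.mpr ?_
  rintro _ ⟨a, u, rfl⟩
  rw [SetLike.mem_coe, Submodule.mem_comap, LinearMap.mulLeft_apply, ← mul_assoc, cur_mul_cur,
    hxf, cur_smul, add_mul, smul_mul_assoc, mul_assoc]
  exact add_mem (cur_mul_mem_curMulSpan _ _) (Submodule.smul_mem _ _ (cur_mul_mem_curMulSpan _ _))

theorem mulCurSpan_le_comap_mulRight (hxe : ⁅x, e⁆ = c • e) (m : ℕ) :
    mulCurSpan e ≤ (mulCurSpan e).comap (LinearMap.mulRight ℂ (cur x m)) := by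
  refine Submodule.span_le.mpr ?_
  rintro _ ⟨a, u, rfl⟩
  rw [SetLike.mem_coe, Submodule.mem_comap, LinearMap.mulRight_apply, mul_assoc, cur_mul_cur,
    ← lie_skew, hxe, ← neg_smul, cur_smul, mul_add, mul_smul_comm, ← mul_assoc]
  exact add_mem (mul_cur_mem_mulCurSpan _ _) (Submodule.smul_mem _ _ (mul_cur_mem_mulCurSpan _ _))

theorem curMulSpan_le_comap_mulRight (v : UCA 𝔤) :
    curMulSpan f ≤ (curMulSpan f).comap (LinearMap.mulRight ℂ v) := by
  refine Submodule.span_le.mpr ?_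
  rintro _ ⟨a, u, rfl⟩
  rw [SetLike.mem_coe, Submodule.mem_comap, LinearMap.mulRight_apply, mul_assoc]
  exact cur_mul_mem_curMulSpan _ _

theorem mulCurSpan_le_comap_mulLeft (v : UCA 𝔤) :
    mulCurSpan e ≤ (mulCurSpan e).comap (LinearMap.mulLeft ℂ v) := by
  refine Submodule.span_le.mpr ?_
  rintro _ ⟨a, u, rfl⟩
  rw [SetLike.mem_coe, Submodule.mem_comap, LinearMap.mulLeft_apply, ← mul_assoc]
  exact mul_cur_mem_mulCurSpan _ _

theorem SModEq.cur_mul {u v : UCA 𝔤} (hxf : ⁅x, f⁆ = c • f) (m : ℕ)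
    (huv : u ≡ v [SMOD curMulSpan f ⊔ mulCurSpan e]) :
    cur x m * u ≡ cur x m * v [SMOD curMulSpan f ⊔ mulCurSpan e] :=
  (huv.map (LinearMap.mulLeft ℂ (cur x m))).mono <| Submodule.map_le_iff_le_comap.mpr <| sup_le
    ((curMulSpan_le_comap_mulLeft hxf m).trans (Submodule.comap_mono le_sup_left))
    ((mulCurSpan_le_comap_mulLeft _).trans (Submodule.comap_mono le_sup_right))

theorem SModEq.mul_cur {u v : UCA 𝔤} (hxe : ⁅x, e⁆ = c • e) (m : ℕ)
    (huv : u ≡ v [SMOD curMulSpan f ⊔ mulCurSpan e]) :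
    u * cur x m ≡ v * cur x m [SMOD curMulSpan f ⊔ mulCurSpan e] :=
  (huv.map (LinearMap.mulRight ℂ (cur x m))).mono <| Submodule.map_le_iff_le_comap.mpr <| sup_le
    ((curMulSpan_le_comap_mulRight _).trans (Submodule.comap_mono le_sup_left))
    ((mulCurSpan_le_comap_mulRight hxe m).trans (Submodule.comap_mono le_sup_right))

theorem cur_mul_smodEq_zero (a : ℕ) (u : UCA 𝔤) :
    cur f a * u ≡ 0 [SMOD curMulSpan f ⊔ mulCurSpan e] :=
  SModEq.zero.mpr (Submodule.mem_sup_left (cur_mul_mem_curMulSpan a u))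

theorem mul_cur_smodEq_zero (a : ℕ) (u : UCA 𝔤) :
    u * cur e a ≡ 0 [SMOD curMulSpan f ⊔ mulCurSpan e] :=
  SModEq.zero.mpr (Submodule.mem_sup_right (mul_cur_mem_mulCurSpan a u))

end Spans

section Sl2Triple

variable {𝔤 : Type} [LieRing 𝔤] [LieAlgebra ℂ 𝔤] {e f h : 𝔤}

theorem cur_mul_cur_pow_add_two (rel2 : ⁅h, f⁆ = (-2 : ℂ) • f) (rel3 : ⁅e, f⁆ = h) (n m : ℕ) :
    cur e m * cur f 0 ^ (n + 2) =
      cur f 0 ^ (n + 2) * cur e m + ((n : ℂ) + 2) • (cur f 0 ^ (n + 1) * cur h m)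
        - (((n : ℂ) + 2) * ((n : ℂ) + 1)) • (cur f 0 ^ n * cur f m) := by
  have hef : cur e m * cur f 0 = cur f 0 * cur e m + cur h m := by
    rw [cur_mul_cur, rel3, add_zero]
  have hhf : cur h m * cur f 0 = cur f 0 * cur h m + (-2 : ℂ) • cur f m := by
    rw [cur_mul_cur, rel2, cur_smul, add_zero]
  rw [mul_pow_add_two hef hhf ((commute_cur_cur f m 0).smul_left _), ← Nat.cast_smul_eq_nsmul ℂ,
    ← Nat.cast_smul_eq_nsmul ℂ, Nat.cast_choose_two, mul_smul_comm]
  push_cast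
  module

theorem cur_pow_add_two_mul_cur (rel1 : ⁅h, e⁆ = (2 : ℂ) • e) (rel3 : ⁅e, f⁆ = h) (n m : ℕ) :
    cur e 1 ^ (n + 2) * cur f m =
      cur f m * cur e 1 ^ (n + 2) + ((n : ℂ) + 2) • (cur h (m + 1) * cur e 1 ^ (n + 1))
        - (((n : ℂ) + 2) * ((n : ℂ) + 1)) • (cur e (m + 2) * cur e 1 ^ n) := by
  have hef : cur e 1 * cur f m = cur f m * cur e 1 + cur h (m + 1) := by
    rw [cur_mul_cur, rel3, add_comm 1 m]
  have heh : cur e 1 * cur h (m + 1) = cur h (m + 1) * cur e 1 + (-2 : ℂ) • cur e (m + 2) := by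
    rw [cur_mul_cur, ← lie_skew, rel1, ← neg_smul, cur_smul, add_comm 1, add_assoc]
  rw [pow_add_two_mul hef heh ((commute_cur_cur e 1 (m + 2)).smul_right _),
    ← Nat.cast_smul_eq_nsmul ℂ, ← Nat.cast_smul_eq_nsmul ℂ, Nat.cast_choose_two, smul_mul_assoc]
  push_cast
  module

theorem cur_pow_mul_pow_mul_cur_smodEq (rel1 : ⁅h, e⁆ = (2 : ℂ) • e) (rel3 : ⁅e, f⁆ = h)
    (n m : ℕ) :
    cur e 1 ^ (n + 2) * cur f 0 ^ (n + 1) * cur f m ≡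
      ((n : ℂ) + 2) • (cur h (m + 1) * (cur e 1 ^ (n + 1) * cur f 0 ^ n * cur f 0))
        - (((n : ℂ) + 2) * ((n : ℂ) + 1)) • (cur e 1 ^ n * cur e (m + 2) * cur f 0 ^ (n + 1))
      [SMOD curMulSpan f ⊔ mulCurSpan e] := by
  rw [SModEq.sub_mem]
  convert Submodule.mem_sup_left
    (cur_mul_mem_curMulSpan m (cur e 1 ^ (n + 2) * cur f 0 ^ (n + 1))) using 1
  rw [mul_assoc, ((commute_cur_cur f 0 m).pow_left (n + 1)).eq, ← mul_assoc,
    cur_pow_add_two_mul_cur rel1 rel3, ((commute_cur_cur e (m + 2) 1).pow_right n).eq]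
  simp only [add_mul, sub_mul, smul_mul_assoc, mul_assoc, ← pow_succ]
  abel

theorem cur_pow_mul_cur_mul_pow_smodEq (rel2 : ⁅h, f⁆ = (-2 : ℂ) • f) (rel3 : ⁅e, f⁆ = h)
    (n m : ℕ) :
    cur e 1 ^ (n + 1) * cur e (m + 1) * cur f 0 ^ (n + 2) ≡
      ((n : ℂ) + 2) • (cur e 1 ^ (n + 1) * cur f 0 ^ n * cur f 0 * cur h (m + 1))
        - (((n : ℂ) + 2) * ((n : ℂ) + 1)) • (cur e 1 ^ (n + 1) * cur f 0 ^ n * cur f (m + 1))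
      [SMOD curMulSpan f ⊔ mulCurSpan e] := by
  rw [SModEq.sub_mem]
  convert Submodule.mem_sup_right
    (mul_cur_mem_mulCurSpan (m + 1) (cur e 1 ^ (n + 1) * cur f 0 ^ (n + 2))) using 1
  rw [mul_assoc, cur_mul_cur_pow_add_two rel2 rel3, pow_succ (cur f 0) n]
  simp only [mul_add, mul_sub, mul_smul_comm, ← mul_assoc]
  abel

theorem garland_congruences (rel1 : ⁅h, e⁆ = (2 : ℂ) • e) (rel2 : ⁅h, f⁆ = (-2 : ℂ) • f)
    (rel3 : ⁅e, f⁆ = h) (n : ℕ) : ∀ m,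
    cur e 1 ^ (n + 1) * cur f 0 ^ n * cur f m ≡ garlandV (cur h) n m
      [SMOD curMulSpan f ⊔ mulCurSpan e] ∧
    cur e 1 ^ n * cur e (m + 1) * cur f 0 ^ (n + 1) ≡ garlandV (cur h) n m
      [SMOD curMulSpan f ⊔ mulCurSpan e] := by
  induction n with
  | zero =>
    intro m
    rw [garlandV_zero]
    constructor
    · calc _ = cur f m * cur e 1 + cur h (m + 1) := by
            rw [zero_add, pow_one, pow_zero, mul_one, cur_mul_cur, rel3, add_comm 1]
        _ ≡ 0 + cur h (m + 1) [SMOD curMulSpan f ⊔ mulCurSpan e] :=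
            (cur_mul_smodEq_zero m _).add SModEq.rfl
        _ = cur h (m + 1) := zero_add _
    · calc _ = cur f 0 * cur e (m + 1) + cur h (m + 1) := by
            rw [zero_add, pow_one, pow_zero, one_mul, cur_mul_cur, rel3, add_zero]
        _ ≡ 0 + cur h (m + 1) [SMOD curMulSpan f ⊔ mulCurSpan e] :=
            (mul_cur_smodEq_zero _ _).add SModEq.rfl
        _ = cur h (m + 1) := zero_add _
  | succ n ih =>
    intro m
    have hV : Commute (cur h (m + 1)) (garlandV (cur h) n 0) :=
      commute_garlandV _ (fun r => commute_cur_cur h _ r) n 0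
    rw [garlandV_succ]
    constructor
    · exact (cur_pow_mul_pow_mul_cur_smodEq rel1 rel3 n m).trans
        ((((ih 0).1.cur_mul rel2 (m + 1)).smul _).sub ((ih (m + 1)).2.smul _))
    · rw [hV.eq]
      exact (cur_pow_mul_cur_mul_pow_smodEq rel2 rel3 n m).trans
        ((((ih 0).1.mul_cur rel1 (m + 1)).smul _).sub ((ih (m + 1)).1.smul _))

theorem cur_pow_mul_cur_pow_smodEq (rel1 : ⁅h, e⁆ = (2 : ℂ) • e) (rel2 : ⁅h, f⁆ = (-2 : ℂ) • f)
    (rel3 : ⁅e, f⁆ = h) (s : ℕ) :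
    cur e 1 ^ s * cur f 0 ^ s ≡ ((-1 : ℂ) ^ s * (s.factorial : ℂ) ^ 2) • garlandP (cur h) s
      [SMOD curMulSpan f ⊔ mulCurSpan e] := by
  cases s with
  | zero => simp [garlandP_zero]
  | succ n =>
    rw [← garlandV_zero_right, pow_succ (cur f 0), ← mul_assoc]
    exact ((garland_congruences rel1 rel2 rel3 n) 0).1

end Sl2Triple

section Projection

variable {𝔤 : Type} [LieRing 𝔤] [LieAlgebra ℂ 𝔤] {𝔥 np nm : LieSubalgebra ℂ 𝔤}

theorem cur_mem_Uh {h : 𝔤} (hh : h ∈ 𝔥) (a : ℕ) : cur h a ∈ Uh 𝔤 𝔥 :=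
  Algebra.subset_adjoin ⟨((X : ℂ[X]) ^ a, ⟨h, hh⟩), rfl⟩

theorem curMulSpan_le_NmU {f : 𝔤} (hf : f ∈ nm) : curMulSpan f ≤ NmU 𝔤 nm :=
  Submodule.span_le.mpr fun _ ⟨a, u, hz⟩ => Submodule.subset_span ⟨(X : ℂ[X]) ^ a, ⟨f, hf⟩, u, hz⟩

theorem mulCurSpan_le_NpU {e : 𝔤} (he : e ∈ np) : mulCurSpan e ≤ NpU 𝔤 np :=
  Submodule.span_le.mpr fun _ ⟨a, u, hz⟩ => Submodule.subset_span ⟨(X : ℂ[X]) ^ a, ⟨e, he⟩, u, hz⟩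

end Projection

theorem garland_identity
    (e f h : 𝔤) (he : e ∈ np) (hf : f ∈ nm) (hh : h ∈ 𝔥)
    (rel1 : ⁅h, e⁆ = (2 : ℂ) • e) (rel2 : ⁅h, f⁆ = (-2 : ℂ) • f)
    (rel3 : ⁅e, f⁆ = h)
    (pr : UCA 𝔤 →ₗ[ℂ] UCA 𝔤)
    (hpr1 : ∀ u ∈ Uh 𝔤 𝔥, pr u = u)
    (hpr2 : ∀ u ∈ NmU 𝔤 nm ⊔ NpU 𝔤 np, pr u = 0)
    (s : ℕ) :
    pr ((iotaCA 𝔤 ((X : ℂ[X]) ⊗ₜ e)) ^ s * (iotaCA 𝔤 ((1 : ℂ[X]) ⊗ₜ f)) ^ s) =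
      ((-1 : ℂ) ^ s * (s.factorial : ℂ) ^ 2) •
        garlandP (fun r => iotaCA 𝔤 (((X : ℂ[X]) ^ r) ⊗ₜ h)) s := by
  have hE : iotaCA 𝔤 ((X : ℂ[X]) ⊗ₜ e) = cur e 1 := by rw [cur, pow_one]
  have hF : iotaCA 𝔤 ((1 : ℂ[X]) ⊗ₜ f) = cur f 0 := by rw [cur, pow_zero]
  have hcong := (cur_pow_mul_cur_pow_smodEq rel1 rel2 rel3 s).mono
    (sup_le_sup (curMulSpan_le_NmU hf) (mulCurSpan_le_NpU he))
  rw [hE, hF]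
  calc _ = pr (((-1 : ℂ) ^ s * (s.factorial : ℂ) ^ 2) • garlandP (cur h) s) := by
        rw [← sub_eq_zero, ← map_sub]
        exact hpr2 _ (SModEq.sub_mem.mp hcong)
    _ = _ := hpr1 _ (Subalgebra.smul_mem _ (garlandP_mem _ (cur_mem_Uh hh) s) _)

end
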